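/- arXiv:0812.4154 — 2 statements merged into one kernel-verified Lean document; each statement's English description precedes it below -/
import Mathlib

section
/- Let ε ∈ {1, −1} and let P(z) = Σ_{j=0}^m z^j A_j be an H-palindromic matrix polynomial if ε = 1 and an H-anti-palindromic matrix polynomial if ε = −1. Let λ ∈ ℂ, let x ∈ ℂⁿ with ‖x‖₂ = 1, set r := −P(λ)x and P_x := I − x xᴴ. For j = 0, …, m define ΔA_j := −(xᴴA_j x)· x xᴴ + ‖Λ_m‖₂^{−2} · [ conj(λ)^j · P_x r xᴴ + ε · λ^{m−j} · x rᴴ P_x ]. Then ΔA_{m−j} = ε (ΔA_j)ᴴ for all j = 0, …, m (so ΔP(z) := Σ_{j=0}^m z^j ΔA_j is H-palindromic if ε = 1 and H-anti-palindromic if ε = −1), and P(λ)x + ΔP(λ)x = 0. -/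
/-!
Because `P_x` is Hermitian, `rᴴP_x = wᴴ` for `w := P_x r`, so
`ΔA_j = -(xᴴA_jx) xxᴴ + ‖Λ_m‖⁻² (conj(λ)^j w xᴴ + ε λ^(m-j) x wᴴ)`. The (anti-)palindromic
symmetry then comes from `xᴴA_{m-j}x = ε conj(xᴴA_jx)` and `ε² = 1`. Since `wᴴx = 0`, we get
`λ^j ΔA_j x = -λ^j (xᴴA_jx) x + ‖Λ_m‖⁻² |λ|^{2j} w`, and the weights `|λ|^{2j}` sum to `‖Λ_m‖²`,
so `ΔP(λ)x = -(xᴴP(λ)x) x + w = r = -P(λ)x`.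
-/

noncomputable section

/-- Euclidean (ℓ²) norm of a complex vector. -/
def vnorm {α : Type*} [Fintype α] (x : α → ℂ) : ℝ :=
  Real.sqrt (∑ i, ‖x i‖ ^ 2)

/-- Frobenius norm of a complex matrix. -/
def frobNorm {α : Type*} [Fintype α] (A : Matrix α α ℂ) : ℝ :=
  Real.sqrt (∑ i, ∑ j, ‖A i j‖ ^ 2)

/-- Spectral (operator 2-)norm of a complex matrix. -/
def specNorm {α : Type*} [Fintype α] [DecidableEq α] (A : Matrix α α ℂ) : ℝ :=
  ‖Matrix.toEuclideanCLM (𝕜 := ℂ) A‖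

/-- Evaluation of the matrix polynomial `P(z) = ∑_{j=0}^m z^j A_j`. -/
def evalP {n : ℕ} (m : ℕ) (A : ℕ → Matrix (Fin n) (Fin n) ℂ) (z : ℂ) :
    Matrix (Fin n) (Fin n) ℂ :=
  ∑ j ∈ Finset.range (m + 1), z ^ j • A j

/-- `‖Λ_m‖₂² = ∑_{j=0}^m |λ|^{2j}` where `Λ_m = (1, λ, …, λ^m)ᵀ`. -/
def LamNormSq (m : ℕ) (lam : ℂ) : ℝ :=
  ∑ j ∈ Finset.range (m + 1), ‖lam‖ ^ (2 * j)

/-- `‖Π₊(Λ_m)‖₂²`. -/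
def PiPlusSq (m : ℕ) (lam : ℂ) : ℝ :=
  if m % 2 = 1 then
    ∑ j ∈ Finset.range ((m + 1) / 2), ‖lam ^ j + lam ^ (m - j)‖ ^ 2 / 2
  else
    (∑ j ∈ Finset.range (m / 2), ‖lam ^ j + lam ^ (m - j)‖ ^ 2 / 2) + ‖lam ^ (m / 2)‖ ^ 2

/-- `‖Π₋(Λ_m)‖₂²`. -/
def PiMinusSq (m : ℕ) (lam : ℂ) : ℝ :=
  if m % 2 = 1 then
    ∑ j ∈ Finset.range ((m + 1) / 2), ‖lam ^ j - lam ^ (m - j)‖ ^ 2 / 2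
  else
    ∑ j ∈ Finset.range (m / 2), ‖lam ^ j - lam ^ (m - j)‖ ^ 2 / 2

open Matrix Finset

section Projection

variable {ι : Type*} [Fintype ι]

lemma star_dotProduct_self_eq_one_of_vnorm_eq_one {x : ι → ℂ} (hx : vnorm x = 1) :
    star x ⬝ᵥ x = 1 := by
  rw [vnorm, Real.sqrt_eq_one] at hx
  simp [dotProduct, Complex.conj_mul', ← Complex.ofReal_pow, ← Complex.ofReal_sum, hx]

variable {R : Type*} [CommRing R] [StarRing R]

lemma star_dotProduct_conjTranspose_mulVec (A : Matrix ι ι R) (x : ι → R) :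
    star x ⬝ᵥ (Aᴴ *ᵥ x) = star (star x ⬝ᵥ (A *ᵥ x)) := by
  rw [star_dotProduct, star_mulVec, ← dotProduct_mulVec, conjTranspose_conjTranspose]

lemma one_sub_vecMulVec_star_mulVec [DecidableEq ι] (x r : ι → R) :
    (1 - vecMulVec x (star x)) *ᵥ r = r - (star x ⬝ᵥ r) • x := by
  rw [sub_mulVec, one_mulVec, vecMulVec_mulVec, op_smul_eq_smul]

lemma star_dotProduct_one_sub_vecMulVec_star_mulVec [DecidableEq ι] {x : ι → R}
    (hx : star x ⬝ᵥ x = 1) (r : ι → R) :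
    star x ⬝ᵥ ((1 - vecMulVec x (star x)) *ᵥ r) = 0 := by
  rw [one_sub_vecMulVec_star_mulVec, dotProduct_sub, dotProduct_smul, hx, smul_eq_mul, mul_one,
    sub_self]

lemma star_one_sub_vecMulVec_star_mulVec [DecidableEq ι] (x r : ι → R) :
    star ((1 - vecMulVec x (star x)) *ᵥ r) = star r ᵥ* (1 - vecMulVec x (star x)) := by
  rw [star_mulVec, conjTranspose_sub, conjTranspose_one, conjTranspose_vecMulVec, star_star]

end Projection

def palindromicPerturbation {ι : Type*} (ε : ℂ) (m : ℕ) (lam : ℂ) (x w : ι → ℂ) (c : ℕ → ℂ)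
    (j : ℕ) : Matrix ι ι ℂ :=
  -(c j • vecMulVec x (star x)) +
    (LamNormSq m lam)⁻¹ • (star (lam ^ j) • vecMulVec w (star x) +
      ε • lam ^ (m - j) • vecMulVec x (star w))

section Perturbation

variable {ι : Type*} {ε : ℂ} {m : ℕ} {lam : ℂ} {x w : ι → ℂ} {c : ℕ → ℂ}

lemma palindromicPerturbation_sub (hε : ε = 1 ∨ ε = -1) {j : ℕ} (hj : j ≤ m)
    (hc : c (m - j) = ε * star (c j)) :
    palindromicPerturbation ε m lam x w c (m - j) =
      ε • (palindromicPerturbation ε m lam x w c j)ᴴ := by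
  unfold palindromicPerturbation
  rw [Nat.sub_sub_self hj, hc]
  simp only [conjTranspose_add, conjTranspose_neg, conjTranspose_smul, conjTranspose_vecMulVec,
    star_star, star_trivial]
  rcases hε with rfl | rfl <;> simp only [star_one, star_neg] <;> module

lemma palindromicPerturbation_mulVec [Fintype ι] (hx : star x ⬝ᵥ x = 1)
    (hw : star w ⬝ᵥ x = 0) (j : ℕ) :
    palindromicPerturbation ε m lam x w c j *ᵥ x =
      -c j • x + ((LamNormSq m lam)⁻¹ * star (lam ^ j) : ℂ) • w := by
  simp only [palindromicPerturbation, add_mulVec, neg_mulVec, smul_mulVec, vecMulVec_mulVec,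
    op_smul_eq_smul, hx, hw]
  module

end Perturbation

lemma evalP_congr {n m : ℕ} {A B : ℕ → Matrix (Fin n) (Fin n) ℂ} (h : ∀ j ≤ m, A j = B j)
    (z : ℂ) : evalP m A z = evalP m B z :=
  sum_congr rfl fun j hj => by rw [h j (Nat.lt_succ_iff.mp (mem_range.mp hj))]

lemma evalP_mulVec {n : ℕ} (m : ℕ) (A : ℕ → Matrix (Fin n) (Fin n) ℂ) (z : ℂ) (v : Fin n → ℂ) :
    evalP m A z *ᵥ v = ∑ j ∈ range (m + 1), z ^ j • (A j *ᵥ v) := by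
  simp only [evalP, sum_mulVec, smul_mulVec]

lemma dotProduct_evalP_mulVec {n : ℕ} (m : ℕ) (A : ℕ → Matrix (Fin n) (Fin n) ℂ) (z : ℂ)
    (u v : Fin n → ℂ) :
    u ⬝ᵥ (evalP m A z *ᵥ v) = ∑ j ∈ range (m + 1), z ^ j * (u ⬝ᵥ (A j *ᵥ v)) := by
  simp only [evalP_mulVec, dotProduct_sum, dotProduct_smul, smul_eq_mul]

lemma LamNormSq_eq_sum_mul_star (m : ℕ) (lam : ℂ) :
    (LamNormSq m lam : ℂ) = ∑ j ∈ range (m + 1), lam ^ j * star (lam ^ j) := by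
  rw [LamNormSq, Complex.ofReal_sum]
  refine sum_congr rfl fun j _ => ?_
  rw [Complex.star_def, Complex.mul_conj', norm_pow]
  push_cast
  ring

lemma one_le_LamNormSq (m : ℕ) (lam : ℂ) : 1 ≤ LamNormSq m lam := by
  rw [LamNormSq, sum_range_succ', mul_zero, pow_zero]
  exact le_add_of_nonneg_left (sum_nonneg fun _ _ => by positivity)

lemma evalP_palindromicPerturbation_mulVec {n : ℕ} {ε : ℂ} {m : ℕ} {lam : ℂ}
    {x w : Fin n → ℂ} (c : ℕ → ℂ) (hx : star x ⬝ᵥ x = 1) (hw : star w ⬝ᵥ x = 0) :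
    evalP m (palindromicPerturbation ε m lam x w c) lam *ᵥ x =
      -(∑ j ∈ range (m + 1), lam ^ j * c j) • x + w := by
  have hL : (LamNormSq m lam : ℂ) ≠ 0 :=
    Complex.ofReal_ne_zero.mpr (zero_lt_one.trans_le (one_le_LamNormSq m lam)).ne'
  have hcoeff :
      ∑ j ∈ range (m + 1), lam ^ j * (((LamNormSq m lam)⁻¹ : ℝ) * star (lam ^ j)) = 1 := by
    simp_rw [Complex.ofReal_inv, mul_left_comm _ (LamNormSq m lam : ℂ)⁻¹]
    rw [← mul_sum, ← LamNormSq_eq_sum_mul_star, inv_mul_cancel₀ hL]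
  simp only [evalP_mulVec, palindromicPerturbation_mulVec hx hw, smul_add, smul_smul,
    sum_add_distrib, ← sum_smul, hcoeff, one_smul, mul_neg, sum_neg_distrib]

theorem stmt_1_general {m n : ℕ}
    (ε : ℂ) (hε : ε = 1 ∨ ε = -1)
    (A : ℕ → Matrix (Fin n) (Fin n) ℂ)
    (hpal : ∀ j ≤ m, A (m - j) = ε • (A j).conjTranspose)
    (lam : ℂ) (x : Fin n → ℂ) (hx : vnorm x = 1)
    (r : Fin n → ℂ) (hr : r = -(evalP m A lam).mulVec x)
    (Px : Matrix (Fin n) (Fin n) ℂ)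
    (hPx : Px = 1 - Matrix.vecMulVec x (star x))
    (ΔA : ℕ → Matrix (Fin n) (Fin n) ℂ)
    (hΔA : ∀ j ≤ m, ΔA j =
      -((dotProduct (star x) ((A j).mulVec x)) • Matrix.vecMulVec x (star x)) +
        (LamNormSq m lam)⁻¹ •
          ((starRingEnd ℂ lam) ^ j • Matrix.vecMulVec (Px.mulVec r) (star x) +
            ε • (lam ^ (m - j) •
              Matrix.vecMulVec x (Matrix.vecMul (star r) Px)))) :
    (∀ j ≤ m, ΔA (m - j) = ε • (ΔA j).conjTranspose) ∧
      (evalP m A lam).mulVec x + (evalP m ΔA lam).mulVec x = 0 := by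
  have hxx := star_dotProduct_self_eq_one_of_vnorm_eq_one hx
  subst hPx
  set c : ℕ → ℂ := fun j => star x ⬝ᵥ (A j *ᵥ x)
  set w := (1 - vecMulVec x (star x)) *ᵥ r with hw_def
  have hw : star w ⬝ᵥ x = 0 := by
    rw [star_dotProduct, star_dotProduct_one_sub_vecMulVec_star_mulVec hxx, star_zero]
  have hΔA' : ∀ j ≤ m, ΔA j = palindromicPerturbation ε m lam x w c j := fun j hj => by
    rw [hΔA j hj, ← star_one_sub_vecMulVec_star_mulVec, ← map_pow]
    rfl
  refine ⟨fun j hj => ?_, ?_⟩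
  · rw [hΔA' _ (m.sub_le j), hΔA' j hj]
    refine palindromicPerturbation_sub hε hj ?_
    simp only [c, hpal j hj, smul_mulVec, dotProduct_smul, smul_eq_mul,
      star_dotProduct_conjTranspose_mulVec]
  · rw [evalP_congr hΔA', evalP_palindromicPerturbation_mulVec c hxx hw, hw_def,
      one_sub_vecMulVec_star_mulVec, hr, dotProduct_neg, dotProduct_evalP_mulVec]
    module

/-- existence of an H-palindromic (ε = 1) / H-anti-palindromic (ε = −1)
structured perturbation `ΔP` with `P(λ)x + ΔP(λ)x = 0`. -/
theorem stmt_1 {m n : ℕ} (hm : 0 < m) (hn : 0 < n)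
    (ε : ℂ) (hε : ε = 1 ∨ ε = -1)
    (A : ℕ → Matrix (Fin n) (Fin n) ℂ)
    (hpal : ∀ j ≤ m, A (m - j) = ε • (A j).conjTranspose)
    (lam : ℂ) (x : Fin n → ℂ) (hx : vnorm x = 1)
    (r : Fin n → ℂ) (hr : r = -(evalP m A lam).mulVec x)
    (Px : Matrix (Fin n) (Fin n) ℂ)
    (hPx : Px = 1 - Matrix.vecMulVec x (star x))
    (ΔA : ℕ → Matrix (Fin n) (Fin n) ℂ)
    (hΔA : ∀ j ≤ m, ΔA j =
      -((dotProduct (star x) ((A j).mulVec x)) • Matrix.vecMulVec x (star x)) +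
        (LamNormSq m lam)⁻¹ •
          ((starRingEnd ℂ lam) ^ j • Matrix.vecMulVec (Px.mulVec r) (star x) +
            ε • (lam ^ (m - j) •
              Matrix.vecMulVec x (Matrix.vecMul (star r) Px)))) :
    (∀ j ≤ m, ΔA (m - j) = ε • (ΔA j).conjTranspose) ∧
      (evalP m A lam).mulVec x + (evalP m ΔA lam).mulVec x = 0 :=
  stmt_1_general ε hε A hpal lam x hx r hr Px hPx ΔA hΔA
end
end

section
/- Let m be even, let P be a regular T-palindromic matrix polynomial of degree m with n×n coefficients, let λ ∈ {1, −1}, and let x ∈ ℂⁿ with ‖x‖₂ = 1; set r := −P(λ)x. Then the Frobenius-norm structured backward error over the class S_p of T-palindromic polynomials of degree m satisfies η_F^{S_p}(λ, x, P) = √( (2‖r‖₂² − |xᵀr|²)/(m+1) ). -/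
noncomputable section

/-- Frobenius-norm structured backward error over T-palindromic polynomials of degree `m`. -/
def etaF_Tpal {n : ℕ} (m : ℕ) (A : ℕ → Matrix (Fin n) (Fin n) ℂ) (lam : ℂ)
    (x : Fin n → ℂ) : ℝ :=
  sInf { e : ℝ | ∃ Δ : ℕ → Matrix (Fin n) (Fin n) ℂ,
    (∀ j ≤ m, Δ (m - j) = (Δ j).transpose) ∧
    (evalP m A lam).mulVec x + (evalP m Δ lam).mulVec x = 0 ∧
    e = Real.sqrt (∑ j ∈ Finset.range (m + 1), frobNorm (Δ j) ^ 2) }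

/-!
For `λ = ±1` and `m` even, `λ ^ (m - j) = λ ^ j`, so the value `B = ΔP(λ)` of a T-palindromic
perturbation is a complex symmetric matrix, and the constraint reads `B x = r`. Among symmetric
`B` with `B x = r` the Frobenius norm is minimised by `B₀ = r x̄ᵀ + x̄ (r - (xᵀr) x̄)ᵀ`: every
rank-one piece of `B₀` carries a factor `x̄`, so `B₀` is Frobenius-orthogonal to each symmetric
`C` with `C x = 0`, and `‖B₀‖_F² = 2‖r‖² - |xᵀr|²`. Cauchy–Schwarz gives
`‖ΔP(λ)‖_F² ≤ (m + 1) |||ΔP|||_F²`, with equality for the palindromic choice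
`ΔA_j = λ ^ j B₀ / (m + 1)`.
-/

open Finset Matrix

section Norms

variable {α : Type*} [Fintype α]

lemma ofReal_vnorm_sq (x : α → ℂ) : ((vnorm x ^ 2 : ℝ) : ℂ) = star x ⬝ᵥ x := by
  rw [vnorm, Real.sq_sqrt (by positivity)]
  push_cast
  simp [dotProduct, ← Complex.conj_mul']

lemma ofReal_frobNorm_sq (A : Matrix α α ℂ) : ((frobNorm A ^ 2 : ℝ) : ℂ) = trace (Aᴴ * A) := by
  rw [frobNorm, Real.sq_sqrt (by positivity), sum_comm]
  push_cast
  simp [trace, mul_apply, ← Complex.conj_mul']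

attribute [local instance] Matrix.frobeniusNormedAddCommGroup Matrix.frobeniusNormedSpace

lemma frobNorm_eq_norm (A : Matrix α α ℂ) : frobNorm A = ‖A‖ := by
  rw [frobNorm, frobenius_norm_def, Real.sqrt_eq_rpow]
  norm_cast

lemma frobNorm_smul (c : ℂ) (B : Matrix α α ℂ) : frobNorm (c • B) = ‖c‖ * frobNorm B := by
  simp only [frobNorm_eq_norm, norm_smul]

lemma frobNorm_evalP_sq_le {n m : ℕ} {lam : ℂ} (hlam : ‖lam‖ = 1)
    (Δ : ℕ → Matrix (Fin n) (Fin n) ℂ) :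
    frobNorm (evalP m Δ lam) ^ 2 ≤ (m + 1) * ∑ j ∈ range (m + 1), frobNorm (Δ j) ^ 2 := by
  simp only [frobNorm_eq_norm]
  calc ‖evalP m Δ lam‖ ^ 2 ≤ (∑ j ∈ range (m + 1), ‖Δ j‖) ^ 2 := by
        gcongr
        refine (norm_sum_le _ _).trans_eq (sum_congr rfl fun j _ => ?_)
        rw [norm_smul, norm_pow, hlam, one_pow, one_mul]
    _ ≤ (m + 1) * ∑ j ∈ range (m + 1), ‖Δ j‖ ^ 2 := by
        simpa using sq_sum_le_card_mul_sum_sq (s := range (m + 1)) (f := fun j => ‖Δ j‖)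

end Norms

section SymmInterp

variable {α : Type*} [Fintype α] (x r : α → ℂ)

def symmInterp : Matrix α α ℂ :=
  vecMulVec r (star x) + vecMulVec (star x) (r - (x ⬝ᵥ r) • star x)

lemma transpose_symmInterp : (symmInterp x r)ᵀ = symmInterp x r := by
  ext i k
  simp only [symmInterp, transpose_apply, Matrix.add_apply, vecMulVec_apply, Pi.sub_apply,
    Pi.smul_apply, smul_eq_mul]
  ring

variable {x}

lemma symmInterp_mulVec (hx : star x ⬝ᵥ x = 1) : symmInterp x r *ᵥ x = r := by
  simp [symmInterp, add_mulVec, vecMulVec_mulVec, hx, sub_dotProduct, dotProduct_comm r x]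

lemma trace_conjTranspose_symmInterp_mul {M : Matrix α α ℂ} (hM : Mᵀ = M) :
    trace ((symmInterp x r)ᴴ * M) = star ((2 : ℂ) • r - (x ⬝ᵥ r) • star x) ⬝ᵥ M *ᵥ x := by
  rw [symmInterp, conjTranspose_add, conjTranspose_vecMulVec, conjTranspose_vecMulVec, add_mul,
    vecMulVec_mul, vecMulVec_mul, trace_add, trace_vecMulVec, trace_vecMulVec, star_star,
    dotProduct_comm x, ← dotProduct_mulVec, ← mulVec_transpose, hM, ← add_dotProduct,
    two_smul, add_sub_assoc, star_add]

lemma frobNorm_symmInterp_sq (hx : star x ⬝ᵥ x = 1) :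
    frobNorm (symmInterp x r) ^ 2 = 2 * vnorm r ^ 2 - ‖x ⬝ᵥ r‖ ^ 2 := by
  apply Complex.ofReal_injective
  rw [ofReal_frobNorm_sq, trace_conjTranspose_symmInterp_mul r (transpose_symmInterp x r),
    symmInterp_mulVec r hx, Complex.ofReal_sub, Complex.ofReal_mul, ofReal_vnorm_sq,
    Complex.ofReal_pow, ← Complex.conj_mul']
  simp only [star_sub, star_smul, star_star, sub_dotProduct, smul_dotProduct, dotProduct_comm x r,
    Complex.star_def, smul_eq_mul, map_ofNat]
  push_cast
  ring

lemma frobNorm_symmInterp_sq_le (hx : star x ⬝ᵥ x = 1) {B : Matrix α α ℂ} (hB : Bᵀ = B)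
    (hBx : B *ᵥ x = r) : frobNorm (symmInterp x r) ^ 2 ≤ frobNorm B ^ 2 := by
  set C := B - symmInterp x r
  have hC : Cᵀ = C := by rw [transpose_sub, hB, transpose_symmInterp]
  have hCx : C *ᵥ x = 0 := by rw [sub_mulVec, hBx, symmInterp_mulVec r hx, sub_self]
  have horth : trace ((symmInterp x r)ᴴ * C) = 0 := by
    rw [trace_conjTranspose_symmInterp_mul r hC, hCx, dotProduct_zero]
  have horth' : trace (Cᴴ * symmInterp x r) = 0 := by
    rw [← conjTranspose_conjTranspose (symmInterp x r), ← conjTranspose_mul,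
      trace_conjTranspose, horth, star_zero]
  have hpyth : frobNorm B ^ 2 = frobNorm (symmInterp x r) ^ 2 + frobNorm C ^ 2 := by
    apply Complex.ofReal_injective
    rw [show B = symmInterp x r + C by simp [C]]
    simp only [Complex.ofReal_add, ofReal_frobNorm_sq, conjTranspose_add, add_mul, mul_add,
      trace_add, horth, horth']
    ring
  linarith [sq_nonneg (frobNorm C)]

end SymmInterp

section MatrixPolynomial

variable {n m : ℕ} {lam : ℂ}

lemma pow_sub_eq_pow_of_sq_eq_one (hlam : lam ^ 2 = 1) (hm : Even m) {j : ℕ} (hj : j ≤ m) :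
    lam ^ (m - j) = lam ^ j := by
  obtain ⟨t, rfl⟩ := hm
  calc lam ^ (t + t - j) = lam ^ (t + t - j) * (lam ^ 2) ^ j := by rw [hlam, one_pow, mul_one]
    _ = (lam ^ 2) ^ t * lam ^ j := by
      rw [← pow_mul, ← pow_mul, ← pow_add, ← pow_add]
      congr 1
      omega
    _ = lam ^ j := by rw [hlam, one_pow, one_mul]

lemma transpose_evalP (hlam : lam ^ 2 = 1) (hm : Even m) {Δ : ℕ → Matrix (Fin n) (Fin n) ℂ}
    (hΔ : ∀ j ≤ m, Δ (m - j) = (Δ j)ᵀ) : (evalP m Δ lam)ᵀ = evalP m Δ lam :=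
  calc (evalP m Δ lam)ᵀ = ∑ j ∈ range (m + 1), lam ^ (m - j) • Δ (m - j) := by
        rw [evalP, transpose_sum]
        refine sum_congr rfl fun j hj => ?_
        have hjm : j ≤ m := Nat.lt_succ_iff.mp (mem_range.mp hj)
        rw [transpose_smul, hΔ j hjm, pow_sub_eq_pow_of_sq_eq_one hlam hm hjm]
    _ = evalP m Δ lam := by simpa [evalP] using sum_range_reflect (fun j => lam ^ j • Δ j) (m + 1)

def spreadCoeffs (m : ℕ) (lam : ℂ) (B : Matrix (Fin n) (Fin n) ℂ) : ℕ → Matrix (Fin n) (Fin n) ℂ :=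
  fun j => (lam ^ j / (m + 1)) • B

lemma spreadCoeffs_palindromic (hlam : lam ^ 2 = 1) (hm : Even m)
    {B : Matrix (Fin n) (Fin n) ℂ} (hB : Bᵀ = B) :
    ∀ j ≤ m, spreadCoeffs m lam B (m - j) = (spreadCoeffs m lam B j)ᵀ := fun j hj => by
  rw [spreadCoeffs, spreadCoeffs, transpose_smul, hB, pow_sub_eq_pow_of_sq_eq_one hlam hm hj]

lemma evalP_spreadCoeffs (hlam : lam ^ 2 = 1) (B : Matrix (Fin n) (Fin n) ℂ) :
    evalP m (spreadCoeffs m lam B) lam = B := by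
  have hterm : ∀ j, lam ^ j • spreadCoeffs m lam B j = ((m : ℂ) + 1)⁻¹ • B := fun j => by
    rw [spreadCoeffs, smul_smul, mul_div_assoc', ← mul_pow, ← sq, hlam, one_pow, one_div]
  rw [evalP, sum_congr rfl fun j _ => hterm j, sum_const, card_range, ← Nat.cast_smul_eq_nsmul ℂ,
    smul_smul]
  push_cast
  rw [mul_inv_cancel₀ (Nat.cast_add_one_ne_zero m), one_smul]

lemma sum_frobNorm_spreadCoeffs_sq (hlam : ‖lam‖ = 1) (B : Matrix (Fin n) (Fin n) ℂ) :
    ∑ j ∈ range (m + 1), frobNorm (spreadCoeffs m lam B j) ^ 2 = frobNorm B ^ 2 / (m + 1) := by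
  have hnorm : ‖(m : ℂ) + 1‖ = m + 1 := by exact_mod_cast Complex.norm_natCast (m + 1)
  simp only [spreadCoeffs, frobNorm_smul, norm_div, norm_pow, hlam, one_pow, hnorm, sum_const,
    card_range, nsmul_eq_mul]
  push_cast
  field_simp

end MatrixPolynomial

theorem stmt_6_general {m n : ℕ} (hm : Even m)
    (A : ℕ → Matrix (Fin n) (Fin n) ℂ)
    (lam : ℂ) (hlam : lam = 1 ∨ lam = -1)
    (x : Fin n → ℂ) (hx : vnorm x = 1)
    (r : Fin n → ℂ) (hr : r = -(evalP m A lam).mulVec x) :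
    etaF_Tpal m A lam x =
      Real.sqrt ((2 * vnorm r ^ 2 - ‖dotProduct x r‖ ^ 2) / ((m : ℝ) + 1)) := by
  have hlam_sq : lam ^ 2 = 1 := by rcases hlam with rfl | rfl <;> norm_num
  have hlam_norm : ‖lam‖ = 1 := by rcases hlam with rfl | rfl <;> simp
  have hx' : star x ⬝ᵥ x = 1 := by rw [← ofReal_vnorm_sq, hx]; simp
  have hAx : evalP m A lam *ᵥ x = -r := by rw [hr, neg_neg]
  set B₀ := symmInterp x r
  rw [← frobNorm_symmInterp_sq r hx']
  refine IsLeast.csInf_eq ⟨⟨spreadCoeffs m lam B₀,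
    spreadCoeffs_palindromic hlam_sq hm (transpose_symmInterp x r), ?_, ?_⟩, ?_⟩
  · rw [evalP_spreadCoeffs hlam_sq, symmInterp_mulVec r hx', hAx, neg_add_cancel]
  · rw [sum_frobNorm_spreadCoeffs_sq hlam_norm]
  rintro e ⟨Δ, hΔ, hΔx, rfl⟩
  rw [hAx, neg_add_eq_zero, eq_comm] at hΔx
  refine Real.sqrt_le_sqrt ((div_le_iff₀ (by positivity)).mpr ?_)
  calc frobNorm B₀ ^ 2 ≤ frobNorm (evalP m Δ lam) ^ 2 :=
        frobNorm_symmInterp_sq_le r hx' (transpose_evalP hlam_sq hm hΔ) hΔx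
    _ ≤ _ := by rw [mul_comm]; exact frobNorm_evalP_sq_le hlam_norm Δ

/-- Frobenius structured backward error, T-palindromic, m even, λ = ±1. -/
theorem stmt_6 {m n : ℕ} (hm : Even m) (hm0 : 0 < m) (hn : 0 < n)
    (A : ℕ → Matrix (Fin n) (Fin n) ℂ)
    (hpal : ∀ j ≤ m, A (m - j) = (A j).transpose)
    (hreg : ∃ z : ℂ, (evalP m A z).det ≠ 0)
    (lam : ℂ) (hlam : lam = 1 ∨ lam = -1)
    (x : Fin n → ℂ) (hx : vnorm x = 1)
    (r : Fin n → ℂ) (hr : r = -(evalP m A lam).mulVec x) :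
    etaF_Tpal m A lam x =
      Real.sqrt ((2 * vnorm r ^ 2 - ‖dotProduct x r‖ ^ 2) / ((m : ℝ) + 1)) :=
  stmt_6_general hm A lam hlam x hx r hr
end
end
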